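/- arXiv:2003.00633 — 3 statements merged into one kernel-verified Lean document; each statement's English description precedes it below -/
import Mathlib

section
/- Let k be an algebraically closed field of characteristic p > 5, let a ∈ k with a ∉ {0, 1, −1}, and let s ∈ k satisfy s² = a. Then the quotient ring R = k[X,Y]/(Y² − X(X²−1)(X²−a²)) is an integral domain, and its field of fractions K admits a k-algebra automorphism τ with τ(x) = a/x and τ(y) = s³·y/x³ (where x, y denote the images of X, Y), and τ satisfies τ ∘ τ = id and τ ≠ id, i.e. τ has order exactly 2. -/
/-! `Y² - f(X)` with `f = X(X² - 1)(X² - a²)` is irreducible over `k[X]`: `f` has odd degree, so it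
is not a square in the integrally closed ring `k[X]`. Hence `R` is a domain, and `k[x] ⊆ R`, so
`x ≠ 0` and `x² ≠ a`.

On the chart `x ≠ 0`, i.e. on `R[1/x]`, the substitution `x ↦ a/x, y ↦ s³y/x³` respects the curve
equation because `s⁶ = a³`, and applied twice it is the identity. An automorphism of `R[1/x]`
extends to the common fraction field `K`, and it moves `x` because `x² ≠ a`. -/

open MvPolynomial

set_option synthInstance.maxHeartbeats 1000000
set_option maxHeartbeats 1000000

/-- The ideal `(Y² − X(X²−1)(X²−a²))` in `k[X,Y]`, where `X = X 0`, `Y = X 1`. -/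
noncomputable def curveIdeal1 (k : Type) [Field k] (a : k) :
    Ideal (MvPolynomial (Fin 2) k) :=
  Ideal.span {X 1 ^ 2 - X 0 * (X 0 ^ 2 - 1) * (X 0 ^ 2 - C a ^ 2)}

/-- The affine coordinate ring `R = k[X,Y]/(Y² − X(X²−1)(X²−a²))`. -/
abbrev CurveRing1 (k : Type) [Field k] (a : k) : Type :=
  MvPolynomial (Fin 2) k ⧸ curveIdeal1 k a

/-- The image of a polynomial `f ∈ k[X,Y]` in the fraction field of the coordinate ring. -/
noncomputable def emb1 (k : Type) [Field k] (a : k) (f : MvPolynomial (Fin 2) k) :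
    FractionRing (CurveRing1 k a) :=
  algebraMap (CurveRing1 k a) (FractionRing (CurveRing1 k a))
    (Ideal.Quotient.mk (curveIdeal1 k a) f)

open Polynomial.Bivariate (equivMvPolynomial equivMvPolynomial_symm_X_0)

namespace Polynomial

theorem not_isSquare_of_odd_natDegree {R : Type*} [CommRing R] [IsDomain R] {f : R[X]}
    (hf : Odd f.natDegree) : ¬IsSquare f := by
  rintro ⟨g, rfl⟩
  rcases eq_or_ne g 0 with rfl | hg
  · simp at hf
  · rw [natDegree_mul hg hg, ← two_mul] at hf
    exact Nat.not_odd_iff_even.mpr (even_two_mul _) hf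

theorem irreducible_X_sq_sub_C {R : Type*} [CommRing R] [IsDomain R] [IsIntegrallyClosed R]
    {f : R} (hf : ¬IsSquare f) : Irreducible (X ^ 2 - C f) := by
  have hmonic : (X ^ 2 - C f).Monic := monic_X_pow_sub_C f two_ne_zero
  rw [hmonic.irreducible_iff_irreducible_map_fraction_map (K := FractionRing R),
    Polynomial.map_sub, Polynomial.map_pow, map_X, map_C]
  refine X_pow_sub_C_irreducible_of_prime Nat.prime_two fun b hb => hf ?_
  have hint : IsIntegral R b := ⟨X ^ 2 - C f, hmonic, by simp [hb]⟩
  obtain ⟨c, rfl⟩ := IsIntegrallyClosed.isIntegral_iff.mp hint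
  rw [← map_pow] at hb
  exact ⟨c, by rw [← IsFractionRing.injective R (FractionRing R) hb, sq]⟩

theorem Bivariate.equivMvPolynomial_symm_aeval_X_zero {R : Type*} [CommRing R] (q : R[X]) :
    (equivMvPolynomial R).symm (aeval (MvPolynomial.X 0) q) = C q := by
  rw [← aeval_algHom_apply, equivMvPolynomial_symm_X_0, ← CAlgHom_apply (R := R),
    aeval_algHom_apply, aeval_X_left_apply, CAlgHom_apply]

end Polynomial

open Polynomial.Bivariate (equivMvPolynomial_symm_aeval_X_zero)

theorem curve_equation_inv {S : Type*} [CommRing S] {a s x y u : S} (hxu : x * u = 1)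
    (hy : y ^ 2 = x * (x ^ 2 - 1) * (x ^ 2 - a ^ 2)) (hs : s ^ 2 = a) :
    (s ^ 3 * y * u ^ 3) ^ 2 = a * u * ((a * u) ^ 2 - 1) * ((a * u) ^ 2 - a ^ 2) :=
  calc (s ^ 3 * y * u ^ 3) ^ 2 = (s ^ 2) ^ 3 * y ^ 2 * u ^ 6 := by ring
    _ = a ^ 3 * u * (x * u) * ((x * u) ^ 2 - u ^ 2) * ((x * u) ^ 2 - a ^ 2 * u ^ 2) := by
      rw [hs, hy]; ring
    _ = a * u * ((a * u) ^ 2 - 1) * ((a * u) ^ 2 - a ^ 2) := by rw [hxu]; ring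

noncomputable def curvePolynomial (k : Type) [Field k] (a : k) : MvPolynomial (Fin 2) k :=
  X 1 ^ 2 - X 0 * (X 0 ^ 2 - 1) * (X 0 ^ 2 - C a ^ 2)

section

variable {k : Type} [Field k] {a : k}

theorem curveIdeal1_eq_span : curveIdeal1 k a = Ideal.span {curvePolynomial k a} := rfl

theorem equivMvPolynomial_symm_curvePolynomial :
    (equivMvPolynomial k).symm (curvePolynomial k a) = Polynomial.X ^ 2 - Polynomial.C
      (Polynomial.X * (Polynomial.X ^ 2 - 1) * (Polynomial.X ^ 2 - Polynomial.C a ^ 2)) := by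
  simp [curvePolynomial]

theorem prime_curvePolynomial : Prime (curvePolynomial k a) := by
  rw [← UniqueFactorizationMonoid.irreducible_iff_prime,
    ← MulEquiv.irreducible_iff (equivMvPolynomial k).symm, equivMvPolynomial_symm_curvePolynomial]
  refine Polynomial.irreducible_X_sq_sub_C (Polynomial.not_isSquare_of_odd_natDegree ?_)
  have : (Polynomial.X * (Polynomial.X ^ 2 - 1) *
      (Polynomial.X ^ 2 - Polynomial.C a ^ 2)).natDegree = 5 := by
    compute_degree!
  rw [this]
  decide

theorem isPrime_curveIdeal1 : (curveIdeal1 k a).IsPrime :=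
  curveIdeal1_eq_span (a := a) ▸
    (Ideal.span_singleton_prime prime_curvePolynomial.ne_zero).mpr prime_curvePolynomial

theorem CurveRing1.isDomain : IsDomain (CurveRing1 k a) :=
  have := isPrime_curveIdeal1 (a := a)
  Ideal.Quotient.isDomain _

end

namespace CurveRing1

section Presentation

variable (k : Type) [Field k] (a : k)

noncomputable def x : CurveRing1 k a := Ideal.Quotient.mkₐ k _ (X 0)

noncomputable def y : CurveRing1 k a := Ideal.Quotient.mkₐ k _ (X 1)

theorem y_sq : y k a ^ 2 = x k a * (x k a ^ 2 - 1) * (x k a ^ 2 - algebraMap k _ a ^ 2) := by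
  have h : curvePolynomial k a ∈ curveIdeal1 k a := Ideal.subset_span rfl
  rw [← Ideal.Quotient.eq_zero_iff_mem, ← Ideal.Quotient.mkₐ_eq_mk k, curvePolynomial] at h
  simp only [map_sub, map_mul, map_pow, map_one, algHom_C] at h
  exact sub_eq_zero.mp h

variable {k a} {S : Type*} [CommRing S] [Algebra k S]

noncomputable def lift (u v : S) (h : v ^ 2 = u * (u ^ 2 - 1) * (u ^ 2 - algebraMap k S a ^ 2)) :
    CurveRing1 k a →ₐ[k] S :=
  Ideal.Quotient.liftₐ _ (aeval ![u, v]) fun f hf => by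
    obtain ⟨g, rfl⟩ := Ideal.mem_span_singleton'.mp hf
    simp [h]

@[simp]
theorem lift_x (u v : S) (h) : lift (a := a) u v h (x k a) = u := by
  change aeval ![u, v] (X 0) = u
  simp

@[simp]
theorem lift_y (u v : S) (h) : lift (a := a) u v h (y k a) = v := by
  change aeval ![u, v] (X 1) = v
  simp

theorem algHom_ext {f g : CurveRing1 k a →ₐ[k] S} (hx : f (x k a) = g (x k a))
    (hy : f (y k a) = g (y k a)) : f = g := by
  refine Ideal.Quotient.algHom_ext _ (MvPolynomial.algHom_ext fun i => ?_)
  fin_cases i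
  exacts [hx, hy]

theorem aeval_x_ne_zero {q : Polynomial k} (hq : q ≠ 0) : Polynomial.aeval (x k a) q ≠ 0 := by
  rw [x, Polynomial.aeval_algHom_apply, Ideal.Quotient.mkₐ_eq_mk, Ne,
    Ideal.Quotient.eq_zero_iff_mem, curveIdeal1_eq_span, Ideal.mem_span_singleton]
  intro hdvd
  have := Polynomial.natDegree_le_of_dvd (map_dvd (equivMvPolynomial k).symm hdvd)
    (by simpa [equivMvPolynomial_symm_aeval_X_zero] using hq)
  rw [equivMvPolynomial_symm_aeval_X_zero, Polynomial.natDegree_C,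
    equivMvPolynomial_symm_curvePolynomial, Polynomial.natDegree_X_pow_sub_C] at this
  omega

theorem x_ne_zero : x k a ≠ 0 := by
  simpa using aeval_x_ne_zero (a := a) Polynomial.X_ne_zero

theorem x_sq_ne_algebraMap : x k a ^ 2 ≠ algebraMap k _ a := by
  simpa [sub_eq_zero] using
    aeval_x_ne_zero (a := a) (Polynomial.X_pow_sub_C_ne_zero two_pos a)

end Presentation

section Involution

variable {k : Type} [Field k] {a s : k}

local notation "ι" => algebraMap (CurveRing1 k a) (Localization.Away (x k a))
local notation "x⁻¹" => IsLocalization.Away.invSelf (x k a)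

noncomputable def invMap (hs : s ^ 2 = a) : CurveRing1 k a →ₐ[k] Localization.Away (x k a) :=
  lift (algebraMap k _ a * x⁻¹) (algebraMap k _ s ^ 3 * ι (y k a) * x⁻¹ ^ 3) <| by
    refine curve_equation_inv (IsLocalization.Away.mul_invSelf _) ?_ (by rw [← map_pow, hs])
    have := congrArg ι (y_sq k a)
    simp only [map_mul, map_sub, map_pow, map_one, ← IsScalarTower.algebraMap_apply] at this
    exact this

theorem isUnit_invMap_x (ha : a ≠ 0) (hs : s ^ 2 = a) : IsUnit (invMap hs (x k a)) := by
  rw [invMap, lift_x]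
  exact ((IsUnit.mk0 _ ha).map _).mul (.of_mul_eq_one_right _ (IsLocalization.Away.mul_invSelf _))

noncomputable def awayInvolution (ha : a ≠ 0) (hs : s ^ 2 = a) :
    Localization.Away (x k a) →ₐ[k] Localization.Away (x k a) :=
  IsLocalization.Away.liftAlgHom (x k a) (isUnit_invMap_x ha hs)

variable (ha : a ≠ 0) (hs : s ^ 2 = a)

theorem awayInvolution_x : awayInvolution ha hs (ι (x k a)) = algebraMap k _ a * x⁻¹ := by
  simp [awayInvolution, invMap]

theorem awayInvolution_y :
    awayInvolution ha hs (ι (y k a)) = algebraMap k _ s ^ 3 * ι (y k a) * x⁻¹ ^ 3 := by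
  simp [awayInvolution, invMap]

theorem awayInvolution_invSelf : awayInvolution ha hs x⁻¹ = algebraMap k _ a⁻¹ * ι (x k a) := by
  have hx : awayInvolution ha hs (ι (x k a)) * awayInvolution ha hs x⁻¹ = 1 := by
    rw [← map_mul, IsLocalization.Away.mul_invSelf, map_one]
  rw [awayInvolution_x] at hx
  refine (left_inv_eq_right_inv ?_ hx).symm
  calc _ = algebraMap k _ (a⁻¹ * a) * (ι (x k a) * x⁻¹) := by rw [map_mul]; ring
    _ = 1 := by rw [inv_mul_cancel₀ ha, map_one, IsLocalization.Away.mul_invSelf, one_mul]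

theorem awayInvolution_comp_self :
    (awayInvolution ha hs).comp (awayInvolution ha hs) = AlgHom.id k _ := by
  refine IsLocalization.algHom_ext (Submonoid.powers (x k a)) (algHom_ext ?_ ?_)
  · change awayInvolution ha hs (awayInvolution ha hs (ι (x k a))) = ι (x k a)
    rw [awayInvolution_x, map_mul, AlgHom.commutes, awayInvolution_invSelf, ← mul_assoc,
      ← map_mul, mul_inv_cancel₀ ha, map_one, one_mul]
  · change awayInvolution ha hs (awayInvolution ha hs (ι (y k a))) = ι (y k a)
    rw [awayInvolution_y, map_mul, map_mul, map_pow, map_pow, AlgHom.commutes, awayInvolution_y,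
      awayInvolution_invSelf]
    calc _ = algebraMap k _ ((s ^ 2) ^ 3 * a⁻¹ ^ 3) * ι (y k a) * (ι (x k a) * x⁻¹) ^ 3 := by
          simp only [map_mul, map_pow]; ring
      _ = ι (y k a) := by
          rw [hs, ← mul_pow, mul_inv_cancel₀ ha, IsLocalization.Away.mul_invSelf]; simp

end Involution

section FractionField

attribute [local instance] isDomain

variable {k : Type} [Field k] {a s : k}

local notation "K" => FractionRing (CurveRing1 k a)
local notation "ι" => algebraMap (CurveRing1 k a) (FractionRing (CurveRing1 k a))

theorem exists_fractionRing_involution (ha : a ≠ 0) (hs : s ^ 2 = a) :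
    ∃ τ : K ≃+* K, (∀ c : k, τ (algebraMap k K c) = algebraMap k K c) ∧
      τ (ι (x k a)) = algebraMap k K a / ι (x k a) ∧
      τ (ι (y k a)) = algebraMap k K s ^ 3 * ι (y k a) / ι (x k a) ^ 3 ∧
      τ.trans τ = RingEquiv.refl K := by
  set A := Localization.Away (x k a)
  have hle : Submonoid.powers (x k a) ≤ nonZeroDivisors (CurveRing1 k a) :=
    powers_le_nonZeroDivisors_of_noZeroDivisors x_ne_zero
  let _ := IsLocalization.localizationAlgebraOfSubmonoidLe A K _ _ hle
  have := IsLocalization.localization_isScalarTower_of_submonoid_le A K _ _ hle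
  have := IsFractionRing.isFractionRing_of_isDomain_of_isLocalization (Submonoid.powers (x k a))
    A K
  set σ := awayInvolution ha hs
  have hσ := awayInvolution_comp_self ha hs
  let e : A ≃+* A := (AlgEquiv.ofAlgHom σ σ hσ hσ).toRingEquiv
  have he : e.trans e = RingEquiv.refl A := RingEquiv.ext (AlgHom.congr_fun hσ)
  let τ : K ≃+* K := IsFractionRing.ringEquivOfRingEquiv e
  have hτ (z : A) : τ (algebraMap A K z) = algebraMap A K (σ z) :=
    IsFractionRing.ringEquivOfRingEquiv_algebraMap e z
  have hR (r : CurveRing1 k a) : ι r = algebraMap A K (algebraMap _ A r) :=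
    IsScalarTower.algebraMap_apply _ A K r
  have hτR (r : CurveRing1 k a) : τ (ι r) = algebraMap A K (σ (algebraMap _ A r)) := by
    rw [hR, hτ]
  have hk (c : k) : algebraMap k K c = algebraMap A K (algebraMap k A c) := by
    rw [IsScalarTower.algebraMap_apply k (CurveRing1 k a) K, hR,
      IsScalarTower.algebraMap_apply k (CurveRing1 k a) A]
  have hinv : algebraMap A K (IsLocalization.Away.invSelf (x k a)) = (ι (x k a))⁻¹ := by
    refine eq_inv_of_mul_eq_one_right ?_
    rw [hR, ← map_mul, IsLocalization.Away.mul_invSelf, map_one]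
  refine ⟨τ, fun c => ?_, ?_, ?_, ?_⟩
  · rw [hk, hτ, AlgHom.commutes]
  · rw [hτR, awayInvolution_x, map_mul, ← hk, hinv, div_eq_mul_inv]
  · rw [hτR, awayInvolution_y, map_mul, map_mul, map_pow, map_pow, ← hk, ← hR, hinv,
      div_eq_mul_inv, inv_pow]
  · rw [← IsFractionRing.ringEquivOfRingEquiv_comp, he, IsFractionRing.ringEquivOfRingEquiv_refl]

end FractionField

end CurveRing1

theorem stmt1_general (k : Type) [Field k] (a s : k) (ha0 : a ≠ 0) (hs : s ^ 2 = a) :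
    ∃ _ : IsDomain (CurveRing1 k a),
      ∃ τ : FractionRing (CurveRing1 k a) ≃+* FractionRing (CurveRing1 k a),
        (∀ c : k, τ (emb1 k a (C c)) = emb1 k a (C c)) ∧
        τ (emb1 k a (X 0)) = emb1 k a (C a) / emb1 k a (X 0) ∧
        τ (emb1 k a (X 1)) =
          emb1 k a (C s) ^ 3 * emb1 k a (X 1) / emb1 k a (X 0) ^ 3 ∧
        τ.trans τ = RingEquiv.refl _ ∧ τ ≠ RingEquiv.refl _ := by
  have hdom := CurveRing1.isDomain (k := k) (a := a)
  obtain ⟨τ, hτc, hτx, hτy, hττ⟩ := CurveRing1.exists_fractionRing_involution ha0 hs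
  have hC (c : k) : emb1 k a (C c) = algebraMap k _ c :=
    (IsScalarTower.algebraMap_apply k (CurveRing1 k a) _ c).symm
  refine ⟨hdom, τ, fun c => by rw [hC, hτc], by rw [hC]; exact hτx,
    by rw [hC]; exact hτy, hττ, fun h => CurveRing1.x_sq_ne_algebraMap (a := a) ?_⟩
  have hxK : algebraMap _ (FractionRing (CurveRing1 k a)) (CurveRing1.x k a) ≠ 0 :=
    (map_ne_zero_iff _ (IsFractionRing.injective _ _)).mpr CurveRing1.x_ne_zero
  rw [h, RingEquiv.refl_apply, eq_div_iff hxK, ← sq,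
    IsScalarTower.algebraMap_apply k (CurveRing1 k a)] at hτx
  exact IsFractionRing.injective _ (FractionRing (CurveRing1 k a)) (by rw [map_pow, hτx])

theorem stmt1 (k : Type) [Field k] [IsAlgClosed k] (p : ℕ) [CharP k p] (hp : 5 < p)
    (a s : k) (ha0 : a ≠ 0) (ha1 : a ≠ 1) (han1 : a ≠ -1) (hs : s ^ 2 = a) :
    ∃ _ : IsDomain (CurveRing1 k a),
      ∃ τ : FractionRing (CurveRing1 k a) ≃+* FractionRing (CurveRing1 k a),
        (∀ c : k, τ (emb1 k a (C c)) = emb1 k a (C c)) ∧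
        τ (emb1 k a (X 0)) = emb1 k a (C a) / emb1 k a (X 0) ∧
        τ (emb1 k a (X 1)) =
          emb1 k a (C s) ^ 3 * emb1 k a (X 1) / emb1 k a (X 0) ^ 3 ∧
        τ.trans τ = RingEquiv.refl _ ∧ τ ≠ RingEquiv.refl _ :=
  stmt1_general k a s ha0 hs
end

section
/- Let p > 5 be a prime. Set ε₁ = 1 − (−1/p) and ε₃ = 1 − (−3/p) (Legendre symbols), and define rational numbers h₂ = ε₁/2, h₃ = ε₃/2, and h₁ = (p−1)/12 + ε₃/3 + ε₁/4 − h₂ − h₃. Then 9·h₁(h₁−1)/2 + 7h₁ + 6h₂h₁ + 3h₃h₁ + 4h₂ + 2h₃ + 2h₂h₃ = (p−1)(3p+17)/96 + (p+6)·ε₁/16 + ε₃/3. -/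
/-!
Since Legendre symbols of units are `±1`, the quantities `ε = 1 - (a/p)` satisfy `ε² = 2ε`.
Modulo these two relations both sides are the same polynomial in `p`, `ε₁`, `ε₃`.
-/

theorem legendreSym.one_sub_sq {p : ℕ} [Fact p.Prime] {a : ℤ} (ha : (a : ZMod p) ≠ 0) :
    (1 - (legendreSym p a : ℚ)) ^ 2 = 2 * (1 - legendreSym p a) := by
  have hsq : (legendreSym p a : ℚ) ^ 2 = 1 := by exact_mod_cast legendreSym.sq_one p ha
  linear_combination hsq

theorem intCast_neg_three_ne_zero {p : ℕ} [Fact p.Prime] (hp : 3 < p) :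
    ((-3 : ℤ) : ZMod p) ≠ 0 := by
  rw [Ne, ZMod.intCast_zmod_eq_zero_iff_dvd, dvd_neg]
  intro hdvd
  have := Int.le_of_dvd (by norm_num) hdvd
  omega

theorem richelot_count_identity (p ε₁ ε₃ : ℚ) (hε₁ : ε₁ ^ 2 = 2 * ε₁) (hε₃ : ε₃ ^ 2 = 2 * ε₃) :
    let h₂ := ε₁ / 2
    let h₃ := ε₃ / 2
    let h₁ := (p - 1) / 12 + ε₃ / 3 + ε₁ / 4 - h₂ - h₃
    9 * (h₁ * (h₁ - 1) / 2) + 7 * h₁ + 6 * h₂ * h₁ + 3 * h₃ * h₁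
        + 4 * h₂ + 2 * h₃ + 2 * h₂ * h₃ =
      (p - 1) * (3 * p + 17) / 96 + (p + 6) * ε₁ / 16 + ε₃ / 3 := by
  intro h₂ h₃ h₁
  linear_combination (-15 / 32 : ℚ) * hε₁ + (-1 / 8 : ℚ) * hε₃

theorem stmt11 (p : ℕ) [Fact p.Prime] (hp : 5 < p)
    (ε₁ ε₃ h₁ h₂ h₃ : ℚ)
    (hε₁ : ε₁ = 1 - legendreSym p (-1))
    (hε₃ : ε₃ = 1 - legendreSym p (-3))
    (hh₂ : h₂ = ε₁ / 2)
    (hh₃ : h₃ = ε₃ / 2)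
    (hh₁ : h₁ = ((p : ℚ) - 1) / 12 + ε₃ / 3 + ε₁ / 4 - h₂ - h₃) :
    9 * (h₁ * (h₁ - 1) / 2) + 7 * h₁ + 6 * h₂ * h₁ + 3 * h₃ * h₁
        + 4 * h₂ + 2 * h₃ + 2 * h₂ * h₃ =
      ((p : ℚ) - 1) * (3 * (p : ℚ) + 17) / 96 + ((p : ℚ) + 6) * ε₁ / 16 + ε₃ / 3 := by
  have hε₁_sq : ε₁ ^ 2 = 2 * ε₁ := by
    rw [hε₁]
    exact legendreSym.one_sub_sq (by simp)
  have hε₃_sq : ε₃ ^ 2 = 2 * ε₃ := by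
    rw [hε₃]
    exact legendreSym.one_sub_sq (intCast_neg_three_ne_zero (by omega))
  subst hh₁ hh₂ hh₃
  exact richelot_count_identity p ε₁ ε₃ hε₁_sq hε₃_sq
end

section
/- Let M be the set of fixed-point-free involutions in the symmetric group on the set {1, 2, 3, 4, 5, 6} (M has exactly 15 elements), and let the subgroup H of S₆ generated by the permutation (1 2)(3 4)(5 6) act on M by conjugation. Then this action has exactly 11 orbits: exactly 7 orbits of size 1 and exactly 4 orbits of size 2. -/
/-- The set of fixed-point-free involutions of `{1,…,6}` (realized on `Fin 6`). -/
def FPFInv : Set (Equiv.Perm (Fin 6)) := {σ | σ * σ = 1 ∧ ∀ i, σ i ≠ i}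

/-- The subgroup of `S₆` generated by `(1 2)(3 4)(5 6)` (zero-indexed on `Fin 6`). -/
def H12 : Subgroup (Equiv.Perm (Fin 6)) :=
  Subgroup.closure {Equiv.swap 0 1 * Equiv.swap 2 3 * Equiv.swap 4 5}

/-- The orbits of the conjugation action of `H12` on `FPFInv`. -/
def Orbits12 : Set (Set (Equiv.Perm (Fin 6))) :=
  (fun σ => {τ | ∃ g ∈ H12, g * σ * g⁻¹ = τ}) '' FPFInv

/-!
An involution `g` generates the two-element group `{1, g}`, so the conjugation orbit of `σ`
is `{σ, g σ g⁻¹}`. This reduces all four counts to a finite computation over the 720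
permutations of `Fin 6`: the orbits of size one are the 7 involutions commuting with
`(1 2)(3 4)(5 6)`, and the remaining 8 pair up into 4 orbits of size two.
-/

section Involution

variable {G : Type*} [Group G] {g : G}

theorem Subgroup.mem_closure_singleton_iff_of_mul_self (hg : g * g = 1) {h : G} :
    h ∈ Subgroup.closure {g} ↔ h = 1 ∨ h = g := by
  have hinv : g⁻¹ = g := inv_eq_of_mul_eq_one_right hg
  constructor
  · intro hh
    induction hh using Subgroup.closure_induction with
    | mem x hx => exact Or.inr hx
    | one => exact Or.inl rfl
    | mul x y _ _ hx hy => rcases hx with rfl | rfl <;> rcases hy with rfl | rfl <;> simp [hg]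
    | inv x _ hx => rcases hx with rfl | rfl <;> simp [hinv]
  · rintro (rfl | rfl)
    · exact one_mem _
    · exact Subgroup.subset_closure rfl

theorem conj_orbit_closure_singleton_of_mul_self (hg : g * g = 1) (σ : G) :
    {τ | ∃ h ∈ Subgroup.closure {g}, h * σ * h⁻¹ = τ} = {σ, g * σ * g⁻¹} := by
  ext τ
  simp only [Set.mem_ofPred_eq, Subgroup.mem_closure_singleton_iff_of_mul_self hg,
    Set.mem_insert_iff, Set.mem_singleton_iff]
  constructor
  · rintro ⟨h, rfl | rfl, rfl⟩
    · simp
    · exact Or.inr rfl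
  · rintro (rfl | rfl)
    · exact ⟨1, Or.inl rfl, by simp⟩
    · exact ⟨g, Or.inr rfl, rfl⟩

end Involution

section FinsetCoe

variable {α : Type*}

theorem Set.ncard_image_finset_coe (t : Finset (Finset α)) :
    (((↑) : Finset α → Set α) '' t).ncard = t.card := by
  rw [Set.ncard_image_of_injective _ Finset.coe_injective, Set.ncard_coe_finset]

theorem Set.sep_ncard_image_finset_coe (t : Finset (Finset α)) (n : ℕ) :
    {S ∈ ((↑) : Finset α → Set α) '' t | S.ncard = n} =
      (↑) '' (t.filter (·.card = n) : Set (Finset α)) := by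
  ext S
  simp only [Set.mem_ofPred_eq, Set.mem_image, Finset.coe_filter]
  constructor
  · rintro ⟨⟨s, hs, rfl⟩, hn⟩
    exact ⟨s, ⟨hs, by rwa [Set.ncard_coe_finset] at hn⟩, rfl⟩
  · rintro ⟨s, ⟨hs, hn⟩, rfl⟩
    exact ⟨⟨s, hs, rfl⟩, by rwa [Set.ncard_coe_finset]⟩

end FinsetCoe

namespace H12

abbrev gen : Equiv.Perm (Fin 6) := Equiv.swap 0 1 * Equiv.swap 2 3 * Equiv.swap 4 5

def fpfInvFinset : Finset (Equiv.Perm (Fin 6)) :=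
  Finset.univ.filter fun σ => σ * σ = 1 ∧ ∀ i, σ i ≠ i

def orbit (σ : Equiv.Perm (Fin 6)) : Finset (Equiv.Perm (Fin 6)) := {σ, gen * σ * gen⁻¹}

def orbitFinset : Finset (Finset (Equiv.Perm (Fin 6))) := fpfInvFinset.image orbit

theorem coe_fpfInvFinset : (fpfInvFinset : Set (Equiv.Perm (Fin 6))) = FPFInv := by
  ext σ
  simp [fpfInvFinset, FPFInv]

theorem orbits12_eq : Orbits12 = (↑) '' (orbitFinset : Set (Finset (Equiv.Perm (Fin 6)))) := by
  have hgen : gen * gen = 1 := by decide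
  have horbit : (fun σ => {τ | ∃ h ∈ H12, h * σ * h⁻¹ = τ}) = fun σ => (orbit σ : Set _) := by
    funext σ
    rw [H12, conj_orbit_closure_singleton_of_mul_self hgen, orbit, Finset.coe_pair]
  rw [Orbits12, horbit, orbitFinset, Finset.coe_image, ← Set.image_comp, coe_fpfInvFinset]
  rfl

end H12

theorem stmt12 :
    FPFInv.ncard = 15 ∧
    Orbits12.ncard = 11 ∧
    {S ∈ Orbits12 | S.ncard = 1}.ncard = 7 ∧
    {S ∈ Orbits12 | S.ncard = 2}.ncard = 4 := by
  simp only [← H12.coe_fpfInvFinset, H12.orbits12_eq, Set.sep_ncard_image_finset_coe,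
    Set.ncard_image_finset_coe, Set.ncard_coe_finset]
  decide
end
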